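/- Let Ω ⊂ ℝ^{n+1} be bounded open, k > 1, γ > 1 + k, α, s > 0, and 0 < r < α/γ. Let u, u^ε : closure(Ω) → ℝ be Lipschitz with constant c₀ and vanish on ∂Ω, set μ = (1 − ε^s)^k and w_ε(x, y) := μ u(x) − u^ε(y) − (ε^{−α}/γ)|x − y|^γ. Suppose (x̂, ŷ) maximizes w_ε over closure(Ω) × closure(Ω) and x̂ ∈ ∂Ω or ŷ ∈ ∂Ω. Then there are constants c₄ > 0 and ε₁ > 0, depending only on c₀, γ, α, r, such that w_ε(x̂, ŷ) ≤ c₄ ε^r for all 0 < ε < ε₁. -/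

import Mathlib

open MeasureTheory Filter Bornology
open scoped BigOperators Topology

noncomputable section

/-- Euclidean space `ℝ^{n+1}`. -/
abbrev Euc (n : ℕ) : Type := EuclideanSpace ℝ (Fin (n + 1))

/-- The doubling function `w_ε(x, y) = μ u(x) − v(y) − (ε^{−α}/γ)|x − y|^γ`,
with `μ = (1 − ε^s)^k`. -/
def wFun (n : ℕ) (k γ α s ε : ℝ) (u v : Euc n → ℝ) (x y : Euc n) : ℝ :=
  (1 - ε ^ s) ^ k * u x - v y - ε ^ (-α) / γ * ‖x - y‖ ^ γ

/-!
Since `u` and `v` vanish at a boundary point of the maximizing pair, the Lipschitz bound and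
`0 ≤ μ ≤ 1` give `w_ε(x̂, ŷ) ≤ c₀ t − (ε^{−α}/γ) t^γ` with `t = |x̂ − ŷ|`. By Young's inequality
with exponents `γ` and `γ' = γ/(γ − 1)`, the penalty absorbs the linear term up to
`c₀^{γ'} ε^{α γ'/γ}`, and `α γ'/γ > α/γ > r`.
-/

open Real

lemma one_sub_rpow_rpow_mem_Icc {ε s k : ℝ} (hε₀ : 0 ≤ ε) (hε₁ : ε ≤ 1) (hs : 0 ≤ s)
    (hk : 0 ≤ k) : (1 - ε ^ s) ^ k ∈ Set.Icc (0 : ℝ) 1 := by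
  have h₀ := rpow_nonneg hε₀ s
  have h₁ := rpow_le_one hε₀ hε₁ hs
  exact ⟨rpow_nonneg (by linarith) k, rpow_le_one (by linarith) (by linarith) hk⟩

lemma wFun_le_of_eq_zero {n : ℕ} {k γ α s ε : ℝ} {u v : Euc n → ℝ} {S : Set (Euc n)}
    {K : NNReal} {x y : Euc n} (hμ : (1 - ε ^ s) ^ k ∈ Set.Icc (0 : ℝ) 1)
    (hu : LipschitzOnWith K u S) (hv : LipschitzOnWith K v S) (hx : x ∈ S) (hy : y ∈ S)
    (h₀ : u x = 0 ∧ v x = 0 ∨ u y = 0 ∧ v y = 0) :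
    wFun n k γ α s ε u v x y ≤ K * ‖x - y‖ - ε ^ (-α) / γ * ‖x - y‖ ^ γ := by
  suffices (1 - ε ^ s) ^ k * u x - v y ≤ K * ‖x - y‖ by unfold wFun; linarith
  rcases h₀ with ⟨hux, hvx⟩ | ⟨huy, hvy⟩
  · have hvy := hv.dist_le_mul y hy x hx
    rw [hvx, Real.dist_eq, sub_zero, dist_comm, dist_eq_norm] at hvy
    rw [hux, mul_zero, zero_sub]
    exact (neg_le_abs _).trans hvy
  · have hux := hu.dist_le_mul x hx y hy
    rw [huy, Real.dist_eq, sub_zero, dist_eq_norm] at hux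
    rw [hvy, sub_zero]
    calc (1 - ε ^ s) ^ k * u x ≤ (1 - ε ^ s) ^ k * |u x| :=
          mul_le_mul_of_nonneg_left (le_abs_self _) hμ.1
      _ ≤ |u x| := mul_le_of_le_one_left (abs_nonneg _) hμ.2
      _ ≤ K * ‖x - y‖ := hux

lemma mul_sub_div_mul_rpow_le {p q a c t : ℝ} (hpq : p.HolderConjugate q) (ha : 0 < a)
    (hc : 0 ≤ c) (ht : 0 ≤ t) : c * t - a / p * t ^ p ≤ c ^ q / q * a ^ (-(q / p)) := by
  have hp := hpq.ne_zero
  have young := young_inequality_of_nonneg (mul_nonneg (rpow_nonneg ha.le p⁻¹) ht)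
    (mul_nonneg hc (rpow_nonneg ha.le (-p⁻¹))) hpq
  have hprod : a ^ p⁻¹ * t * (c * a ^ (-p⁻¹)) = c * t := by
    rw [rpow_neg ha.le]
    field_simp [(rpow_pos_of_pos ha p⁻¹).ne']
  have hpow_left : (a ^ p⁻¹ * t) ^ p = a * t ^ p := by
    rw [mul_rpow (rpow_nonneg ha.le _) ht, rpow_inv_rpow ha.le hp]
  have hpow_right : (c * a ^ (-p⁻¹)) ^ q = c ^ q * a ^ (-(q / p)) := by
    rw [mul_rpow hc (rpow_nonneg ha.le _), ← rpow_mul ha.le]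
    ring_nf
  rw [hprod, hpow_left, hpow_right] at young
  calc c * t - a / p * t ^ p ≤ c ^ q * a ^ (-(q / p)) / q := by
        rw [div_mul_eq_mul_div]; linarith
    _ = c ^ q / q * a ^ (-(q / p)) := by ring

theorem stmt6_general (c₀ γ α r : ℝ) (hc₀ : 0 < c₀) (hα : 0 < α) (hr : r < α / γ) :
    ∃ c₄ : ℝ, 0 < c₄ ∧ ∃ ε₁ : ℝ, 0 < ε₁ ∧
      ∀ (n : ℕ) (k s ε : ℝ), 1 < k → 1 + k < γ → 0 < s → 0 < ε → ε < ε₁ →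
      ∀ (Ω : Set (Euc n)), IsOpen Ω → IsBounded Ω →
      ∀ u v : Euc n → ℝ,
        LipschitzOnWith (Real.toNNReal c₀) u (closure Ω) →
        LipschitzOnWith (Real.toNNReal c₀) v (closure Ω) →
        (∀ x ∈ frontier Ω, u x = 0) →
        (∀ x ∈ frontier Ω, v x = 0) →
        ∀ xh ∈ closure Ω, ∀ yh ∈ closure Ω,
          (∀ x ∈ closure Ω, ∀ y ∈ closure Ω,
            wFun n k γ α s ε u v x y ≤ wFun n k γ α s ε u v xh yh) →
          (xh ∈ frontier Ω ∨ yh ∈ frontier Ω) →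
          wFun n k γ α s ε u v xh yh ≤ c₄ * ε ^ r := by
  set q := γ / (γ - 1)
  refine ⟨c₀ ^ q, rpow_pos_of_pos hc₀ q, 1, one_pos, ?_⟩
  intro n k s ε hk hγ hs hε hε₁ Ω _ _ u v hu hv hu₀ hv₀ xh hxh yh hyh _ hboundary
  have hγq : γ.HolderConjugate q := HolderConjugate.conjExponent (by linarith)
  have hμ := one_sub_rpow_rpow_mem_Icc (k := k) hε.le hε₁.le hs.le (by linarith)
  have hexp : r ≤ -α * -(q / γ) := by
    have : α / γ ≤ α / γ * q := le_mul_of_one_le_right (div_pos hα hγq.pos).le hγq.symm.lt.le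
    linarith [show -α * -(q / γ) = α / γ * q by ring]
  calc wFun n k γ α s ε u v xh yh
      ≤ c₀ * ‖xh - yh‖ - ε ^ (-α) / γ * ‖xh - yh‖ ^ γ := by
        rw [← coe_toNNReal c₀ hc₀.le]
        refine wFun_le_of_eq_zero hμ hu hv hxh hyh ?_
        rcases hboundary with h | h
        exacts [.inl ⟨hu₀ xh h, hv₀ xh h⟩, .inr ⟨hu₀ yh h, hv₀ yh h⟩]
    _ ≤ c₀ ^ q / q * (ε ^ (-α)) ^ (-(q / γ)) :=
        mul_sub_div_mul_rpow_le hγq (rpow_pos_of_pos hε _) hc₀.le (norm_nonneg _)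
    _ ≤ c₀ ^ q * ε ^ r := by
        rw [← rpow_mul hε.le]
        exact mul_le_mul (div_le_self (rpow_nonneg hc₀.le q) hγq.symm.lt.le)
          (rpow_le_rpow_of_exponent_ge hε hε₁.le hexp) (rpow_nonneg hε.le _)
          (rpow_nonneg hc₀.le q)

/-- If `u, v` are Lipschitz with constant `c₀` on `closure Ω`, vanish on `∂Ω`, and
`(x̂, ŷ)` maximizes `w_ε` over `closure Ω × closure Ω` with `x̂ ∈ ∂Ω` or `ŷ ∈ ∂Ω`, then
`w_ε(x̂, ŷ) ≤ c₄ ε^r` for all `0 < ε < ε₁`, with constants `c₄, ε₁ > 0` depending only on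
`c₀, γ, α, r`. -/
theorem stmt6 (c₀ γ α r : ℝ) (hc₀ : 0 < c₀) (hα : 0 < α) (hr₀ : 0 < r) (hr : r < α / γ) :
    ∃ c₄ : ℝ, 0 < c₄ ∧ ∃ ε₁ : ℝ, 0 < ε₁ ∧
      ∀ (n : ℕ) (k s ε : ℝ), 1 < k → 1 + k < γ → 0 < s → 0 < ε → ε < ε₁ →
      ∀ (Ω : Set (Euc n)), IsOpen Ω → IsBounded Ω →
      ∀ u v : Euc n → ℝ,
        LipschitzOnWith (Real.toNNReal c₀) u (closure Ω) →
        LipschitzOnWith (Real.toNNReal c₀) v (closure Ω) →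
        (∀ x ∈ frontier Ω, u x = 0) →
        (∀ x ∈ frontier Ω, v x = 0) →
        ∀ xh ∈ closure Ω, ∀ yh ∈ closure Ω,
          (∀ x ∈ closure Ω, ∀ y ∈ closure Ω,
            wFun n k γ α s ε u v x y ≤ wFun n k γ α s ε u v xh yh) →
          (xh ∈ frontier Ω ∨ yh ∈ frontier Ω) →
          wFun n k γ α s ε u v xh yh ≤ c₄ * ε ^ r :=
  stmt6_general c₀ γ α r hc₀ hα hr
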